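/- Let X be a set, let M be a nonempty set of functions X → X, and let ≽ be an acyclic binary relation on X that is M-coherent. Then the transitive closure of ≽ is also M-coherent. -/

import Mathlib

/-- The strict part of a binary relation: `x ≻ y` iff `x ≽ y` and not `y ≽ x`. -/
def StrictRel {X : Type*} (R : X → X → Prop) (x y : X) : Prop := R x y ∧ ¬ R y x

/-- `R` is `M`-coherent: every `ω ∈ M` preserves the weak and the strict relation. -/
def Coherent {X : Type*} (M : Set (X → X)) (R : X → X → Prop) : Prop :=
  ∀ ω ∈ M, ∀ x y : X, (R x y → R (ω x) (ω y)) ∧ (StrictRel R x y → StrictRel R (ω x) (ω y))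

/-- `R` is strongly `M`-coherent: coherent, and the converse implications also hold. -/
def StronglyCoherent {X : Type*} (M : Set (X → X)) (R : X → X → Prop) : Prop :=
  Coherent M R ∧
    ∀ ω ∈ M, ∀ x y : X, (R (ω x) (ω y) → R x y) ∧ (StrictRel R (ω x) (ω y) → StrictRel R x y)

/-- `R` is acyclic: there is no `k ≥ 2` and distinct `x₁, …, x_k` with
`x₁ ≽ x₂ ≽ … ≽ x_k` and `x_k ≻ x₁`.  (Indices here run from `0` to `k-1`.) -/
def Acyclic {X : Type*} (R : X → X → Prop) : Prop :=
  ¬ ∃ (k : ℕ) (x : ℕ → X), 2 ≤ k ∧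
      (∀ i j, i < k → j < k → x i = x j → i = j) ∧
      (∀ i, i + 1 < k → R (x i) (x (i + 1))) ∧
      StrictRel R (x (k - 1)) (x 0)

/-- `R'` is an extension of `R`. -/
def IsExtension {X : Type*} (R R' : X → X → Prop) : Prop :=
  (∀ x y, R x y → R' x y) ∧ (∀ x y, StrictRel R x y → StrictRel R' x y)

/-- A commutative family of transformations: nonempty, pairwise commuting, containing
the identity, and closed under composition. -/
def CommFamily {X : Type*} (M : Set (X → X)) : Prop :=
  M.Nonempty ∧ (∀ f ∈ M, ∀ g ∈ M, f ∘ g = g ∘ f) ∧ (id ∈ M) ∧ (∀ f ∈ M, ∀ g ∈ M, f ∘ g ∈ M)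


open Classical in
lemma exists_chain_aux {X : Type*} {R : X → X → Prop} {b a : X}
    (h : Relation.TransGen R b a) :
    ∃ n, 1 ≤ n ∧ ∃ x : ℕ → X, x 0 = b ∧ x n = a ∧ ∀ i < n, R (x i) (x (i+1)) := by
  induction h with
  | @single c hbc =>
    exact ⟨1, le_refl 1, fun m => if m = 0 then b else c, by simp, by simp, by
      intro i hi
      interval_cases i
      simpa using hbc⟩
  | @tail c d _ hcd ih =>
    obtain ⟨n, hn1, x, hx0, hxn, hch⟩ := ih
    refine ⟨n+1, by omega, fun m => if m ≤ n then x m else d, by simp [hx0], by simp, ?_⟩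
    intro i hi
    dsimp only
    rcases lt_or_eq_of_le (Nat.lt_succ_iff.mp hi) with hlt | heq
    · simp only [if_pos (by omega : i ≤ n), if_pos (by omega : i + 1 ≤ n)]
      exact hch i hlt
    · rw [heq]
      simp only [if_pos (le_refl n), if_neg (by omega : ¬ n + 1 ≤ n)]
      rwa [hxn]

open Classical in
lemma acyclic_no_strict_cycle {X : Type*} {R : X → X → Prop} (hacyc : Acyclic R)
    {a b : X} (hab : StrictRel R a b) (hba : Relation.TransGen R b a) : False := by
  have hne : b ≠ a := by
    rintro rfl
    exact hab.2 hab.1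
  have hP : ∃ n, ∃ x : ℕ → X, x 0 = b ∧ x n = a ∧ ∀ i < n, R (x i) (x (i+1)) := by
    obtain ⟨n, _, hx⟩ := exists_chain_aux hba
    exact ⟨n, hx⟩
  obtain ⟨x, hx0, hxn, hch⟩ := Nat.find_spec hP
  set n := Nat.find hP with hn
  have hn1 : 1 ≤ n := by
    rcases Nat.eq_zero_or_pos n with h0 | h1
    · rw [h0] at hxn; exact absurd (hx0 ▸ hxn) hne
    · exact h1
  -- injectivity on [0, n]
  have hinj : ∀ i j, i ≤ n → j ≤ n → x i = x j → i = j := by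
    intro i j hi hj hx
    by_contra hij
    -- wlog i < j
    wlog hlt : i < j generalizing i j
    · exact this j i hj hi hx.symm (Ne.symm hij) (by omega)
    rcases eq_or_lt_of_le hj with rfl | hjn
    · -- j = n : truncate
      have hthis : ∃ y : ℕ → X, y 0 = b ∧ y i = a ∧ ∀ m < i, R (y m) (y (m+1)) :=
        ⟨x, hx0, hx.trans hxn, fun m hm => hch m (by omega)⟩
      exact Nat.find_min hP (by omega : i < Nat.find hP) hthis
    · -- j < n : splice out (i, j]
      set d := j - i with hd
      have hd1 : 1 ≤ d := by omega
      rw [hn] at hjn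
      refine Nat.find_min hP (by omega : n - d < Nat.find hP)
        ⟨fun m => if m ≤ i then x m else x (m + d), ?_, ?_, ?_⟩
      · simp [hx0]
      · dsimp only
        rw [if_neg (by omega : ¬ n - d ≤ i)]
        rw [show n - d + d = n by omega]
        exact hxn
      · intro m hm
        dsimp only
        rcases Nat.lt_or_ge (m+1) (i+1) with h1 | h1
        · rw [if_pos (by omega : m ≤ i), if_pos (by omega : m + 1 ≤ i)]
          exact hch m (by omega)
        · rcases Nat.eq_or_lt_of_le h1 with h2 | h2
          · have hmi : m = i := by omega
            subst hmi
            rw [if_pos (le_refl m), if_neg (by omega : ¬ m + 1 ≤ m),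
              show m + 1 + d = j + 1 by omega, hx]
            exact hch j (by omega)
          · rw [if_neg (by omega : ¬ m ≤ i), if_neg (by omega : ¬ m + 1 ≤ i),
              show m + 1 + d = m + d + 1 by omega]
            exact hch (m + d) (by omega)
  exact hacyc ⟨n + 1, x, by omega,
    fun i j hi hj h => hinj i j (by omega) (by omega) h,
    fun i hi => hch i (by omega),
    by simpa [hxn, hx0] using hab⟩

lemma strict_step_of_transGen {X : Type*} {R : X → X → Prop} {x y : X}
    (h : Relation.TransGen R x y) :
    Relation.TransGen R y x ∨
      ∃ a b, StrictRel R a b ∧ Relation.ReflTransGen R x a ∧ Relation.ReflTransGen R b y := by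
  induction h with
  | @single c hxy =>
    by_cases hyx : R c x
    · exact Or.inl (Relation.TransGen.single hyx)
    · exact Or.inr ⟨x, c, ⟨hxy, hyx⟩, Relation.ReflTransGen.refl, Relation.ReflTransGen.refl⟩
  | @tail p q hxp hpq ih =>
    by_cases hqp : R q p
    · rcases ih with h | ⟨a, b, hs, hxa, hbp⟩
      · exact Or.inl (Relation.TransGen.head hqp h)
      · exact Or.inr ⟨a, b, hs, hxa, hbp.tail hpq⟩
    · exact Or.inr ⟨p, q, ⟨hpq, hqp⟩, hxp.to_reflTransGen, Relation.ReflTransGen.refl⟩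

/-- If `≽` is an acyclic `M`-coherent relation, then so is its transitive closure. -/
theorem transClosure_coherent {X : Type*} (M : Set (X → X)) (R : X → X → Prop)
    (hM : M.Nonempty) (hacyc : Acyclic R) (hcoh : Coherent M R) :
    Coherent M (Relation.TransGen R) := by
  intro ω hω x y
  have hlift : ∀ a b : X, Relation.TransGen R a b → Relation.TransGen R (ω a) (ω b) :=
    fun a b h => Relation.TransGen.lift ω (fun p q hpq => (hcoh ω hω p q).1 hpq) a b h
  have hliftr : ∀ a b : X, Relation.ReflTransGen R a b → Relation.ReflTransGen R (ω a) (ω b) :=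
    fun a b h => Relation.ReflTransGen.lift ω (fun p q hpq => (hcoh ω hω p q).1 hpq) a b h
  refine ⟨hlift x y, ?_⟩
  rintro ⟨hxy, hnyx⟩
  refine ⟨hlift x y hxy, ?_⟩
  intro hcyc
  rcases strict_step_of_transGen hxy with h | ⟨a, b, hs, hxa, hby⟩
  · exact hnyx h
  · have hs' : StrictRel R (ω a) (ω b) := (hcoh ω hω a b).2 hs
    have hchain : Relation.TransGen R (ω b) (ω a) :=
      (Relation.TransGen.trans_right (hliftr b y hby) hcyc).trans_left (hliftr x a hxa)
    exact acyclic_no_strict_cycle hacyc hs' hchain
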